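/- arXiv:1911.12167 — 2 statements merged into one kernel-verified Lean document; each statement's English description precedes it below -/
import Mathlib

section
/- For every fixed positive integer n and 1 ≤ k ≤ n-1, the sequence 𝔲_r(n,k) = (-1)^{n-k} u_r(n,k) satisfies Newton's inequality: 𝔲_r(n,k)² ≥ ((k+1)/k)·((n-k+1)/(n-k))·𝔲_r(n,k-1)·𝔲_r(n,k+1). -/
/-!
`centralu r n k` is the coefficient of `X^k` in `∏_{i<n} (X - (i²+r))`, so by Vieta
`𝔲_r(n,k) = (-1)^(n-k) centralu r n k` is the elementary symmetric function `e_{n-k}` of the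
nonnegative numbers `i² + r`, `i < n`. The theorem is then Newton's inequality, proved by
induction on the number of variables: adjoining a variable `t` replaces `e_i` by
`e_i + t e_{i-1}`, and the new inequality is a quadratic in `t` whose coefficients are controlled
by the old inequalities at two consecutive indices.
-/

/-- `centralu r n k` is the r-central factorial number with even indices of the first kind. -/
def centralu (r : ℕ) : ℕ → ℕ → ℤ
  | 0, 0 => 1
  | 0, _ + 1 => 0
  | n + 1, 0 => (-1) ^ (n + 1) * ∏ i ∈ Finset.range (n + 1), ((i : ℤ) ^ 2 + r)
  | n + 1, k + 1 => centralu r n k - ((n : ℤ) ^ 2 + r) * centralu r n (k + 1)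

open Polynomial

section NewtonStep

variable {R : Type*} [CommRing R] [LinearOrder R] [IsStrictOrderedRing R] {K M a b c d : R}

theorem newton_ineq_outer (hK : 1 ≤ K) (hM : 1 ≤ M) (hb : 0 ≤ b) (hc : 0 ≤ c) (hd : 0 ≤ d)
    (hX : K * (M + 1) * (a * c) ≤ (K - 1) * M * b ^ 2)
    (hY : (K + 1) * M * (b * d) ≤ K * (M - 1) * c ^ 2) (hbc : 0 < d → 0 < b * c) :
    (K + 1) * (M + 1) * (a * d) ≤ (K - 1) * (M - 1) * (b * c) := by
  have hK1 : 0 ≤ K - 1 := by linarith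
  have hM1 : 0 ≤ M - 1 := by linarith
  rcases hd.eq_or_lt with rfl | hd
  · rw [mul_zero, mul_zero]
    exact mul_nonneg (mul_nonneg hK1 hM1) (mul_nonneg hb hc)
  have hXY := mul_le_mul hX hY (by have := mul_nonneg hb hd.le; positivity)
    (by have := sq_nonneg b; positivity)
  have hKMbc : 0 < K * M * (b * c) :=
    mul_pos (mul_pos (by linarith) (by linarith)) (hbc hd)
  refine le_of_mul_le_mul_left ?_ hKMbc
  calc K * M * (b * c) * ((K + 1) * (M + 1) * (a * d))
      = K * (M + 1) * (a * c) * ((K + 1) * M * (b * d)) := by ring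
    _ ≤ (K - 1) * M * b ^ 2 * (K * (M - 1) * c ^ 2) := hXY
    _ = K * M * (b * c) * ((K - 1) * (M - 1) * (b * c)) := by ring

theorem newton_ineq_add_mul_shift (hK : 1 ≤ K) (hM : 1 ≤ M) (t : R) (ht : 0 ≤ t)
    (hb : 0 ≤ b) (hc : 0 ≤ c) (hd : 0 ≤ d)
    (hX : K * (M + 1) * (a * c) ≤ (K - 1) * M * b ^ 2)
    (hY : (K + 1) * M * (b * d) ≤ K * (M - 1) * c ^ 2) (hbc : 0 < d → 0 < b * c) :
    (K + 1) * (M + 1) * ((b + t * a) * (d + t * c)) ≤ K * M * (c + t * b) ^ 2 := by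
  have hZ := newton_ineq_outer hK hM hb hc hd hX hY hbc
  have hKM : 0 < K * M := mul_pos (by linarith) (by linarith)
  refine le_of_mul_le_mul_left ?_ hKM
  -- scaled by `K M`, the gap is a nonnegative combination of the slacks of `hX`, `hY`, `hZ`
  -- plus a square
  have hX' := mul_le_mul_of_nonneg_left hX (by positivity : 0 ≤ (K + 1) * M * t ^ 2)
  have hY' := mul_le_mul_of_nonneg_left hY (by positivity : 0 ≤ K * (M + 1))
  have hZ' := mul_le_mul_of_nonneg_left hZ (by positivity : 0 ≤ K * M * t)
  linear_combination hX' + hY' + hZ' + sq_nonneg (M * t * b - K * c)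

end NewtonStep

namespace Multiset

section CommSemiring

variable {R : Type*} [CommSemiring R]

theorem esymm_zero_right (s : Multiset R) : s.esymm 0 = 1 := by
  simp [esymm]

theorem esymm_cons_succ (a : R) (s : Multiset R) (k : ℕ) :
    (a ::ₘ s).esymm (k + 1) = s.esymm (k + 1) + a * s.esymm k := by
  simp [esymm, map_map, prod_cons, sum_map_mul_left]

theorem esymm_eq_zero_of_card_lt {s : Multiset R} {k : ℕ} (h : card s < k) : s.esymm k = 0 := by
  simp [esymm, powersetCard_eq_empty _ h]

end CommSemiring

theorem esymm_newton_of_card_le {R : Type*} [CommRing R] [Preorder R] {s : Multiset R} {j : ℕ}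
    (h : card s ≤ j + 1) :
    ((j : R) + 2) * (card s - j) * (s.esymm j * s.esymm (j + 2)) ≤
      (j + 1) * (card s - j - 1) * s.esymm (j + 1) ^ 2 := by
  rw [esymm_eq_zero_of_card_lt (by omega : card s < j + 2), mul_zero, mul_zero]
  rcases h.lt_or_eq with h | h
  · rw [esymm_eq_zero_of_card_lt h]; simp
  · rw [h]; simp

section OrderedRing

variable {R : Type*} [CommRing R] [LinearOrder R] [IsStrictOrderedRing R]

theorem esymm_nonneg {s : Multiset R} (hs : ∀ x ∈ s, 0 ≤ x) (k : ℕ) : 0 ≤ s.esymm k := by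
  refine sum_nonneg fun x hx => ?_
  obtain ⟨u, hu, rfl⟩ := mem_map.1 hx
  exact prod_nonneg fun y hy => hs y (mem_of_le (mem_powersetCard.1 hu).1 hy)

theorem esymm_pos_of_esymm_succ_pos {s : Multiset R} (hs : ∀ x ∈ s, 0 ≤ x) {k : ℕ}
    (h : 0 < s.esymm (k + 1)) : 0 < s.esymm k := by
  induction s using Multiset.induction_on generalizing k with
  | empty =>
    rw [esymm_eq_zero_of_card_lt (by simp)] at h
    exact absurd h (lt_irrefl 0)
  | cons t s ih =>
    obtain ⟨ht, hs'⟩ := forall_mem_cons.1 hs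
    rcases k with _ | k
    · simp [esymm_zero_right]
    rw [esymm_cons_succ] at h ⊢
    have hk := esymm_nonneg hs' k
    rcases (esymm_nonneg hs' (k + 2)).eq_or_lt with h0 | hpos
    · rw [← h0, zero_add] at h
      exact add_pos_of_pos_of_nonneg (pos_of_mul_pos_right h ht) (mul_nonneg ht hk)
    · exact add_pos_of_pos_of_nonneg (ih hs' hpos) (mul_nonneg ht hk)

theorem esymm_newton {s : Multiset R} (hs : ∀ x ∈ s, 0 ≤ x) (j : ℕ) :
    ((j : R) + 2) * (card s - j) * (s.esymm j * s.esymm (j + 2)) ≤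
      (j + 1) * (card s - j - 1) * s.esymm (j + 1) ^ 2 := by
  induction s using Multiset.induction_on generalizing j with
  | empty => exact esymm_newton_of_card_le (by simp)
  | cons t s ih =>
    obtain ⟨ht, hs'⟩ := forall_mem_cons.1 hs
    rcases le_or_gt (card s) j with hsj | hjs
    · exact esymm_newton_of_card_le (by simpa using hsj)
    have hM : (1 : R) ≤ card s - j := by
      have : ((j + 1 : ℕ) : R) ≤ card s := by exact_mod_cast hjs
      push_cast at this; linarith
    have hbc : 0 < s.esymm (j + 2) → 0 < s.esymm j * s.esymm (j + 1) := fun hd =>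
      have hc := esymm_pos_of_esymm_succ_pos hs' hd
      mul_pos (esymm_pos_of_esymm_succ_pos hs' hc) hc
    have hY := ih hs' j
    rw [card_cons, Nat.cast_succ]
    rcases j with _ | j
    · push_cast at hM hY hbc ⊢
      rw [esymm_zero_right] at hY hbc
      -- `a = 0` stands for `e₋₁`
      have key := newton_ineq_add_mul_shift (K := 1) (a := 0) le_rfl hM t ht zero_le_one
        (esymm_nonneg hs' 1) (esymm_nonneg hs' 2) (by simp) (by linarith)
        (by simpa using hbc)
      simp only [esymm_cons_succ, esymm_zero_right] at key ⊢
      linarith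
    · have hX := ih hs' j
      push_cast at hM hX hY hbc ⊢
      have key := newton_ineq_add_mul_shift (K := (j : R) + 2) (M := (card s : R) - (j + 1))
        (a := s.esymm j) (by linarith) hM t ht (esymm_nonneg hs' (j + 1))
        (esymm_nonneg hs' (j + 1 + 1)) (esymm_nonneg hs' (j + 1 + 2)) (by linarith) (by linarith)
        hbc
      simp only [esymm_cons_succ] at key ⊢
      linarith

end OrderedRing

end Multiset

/-- The roots of `∑ₖ centralu r n k Xᵏ`. -/
def centralRoots (r n : ℕ) : Multiset ℤ :=
  (Multiset.range n).map fun i : ℕ => (i : ℤ) ^ 2 + r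

theorem card_centralRoots (r n : ℕ) : Multiset.card (centralRoots r n) = n := by
  simp [centralRoots]

theorem centralRoots_nonneg (r n : ℕ) : ∀ x ∈ centralRoots r n, 0 ≤ x := by
  simp only [centralRoots, Multiset.mem_map]
  rintro _ ⟨i, -, rfl⟩
  positivity

theorem centralRoots_succ (r n : ℕ) :
    centralRoots r (n + 1) = ((n : ℤ) ^ 2 + r) ::ₘ centralRoots r n := by
  simp [centralRoots, Multiset.range_succ]

theorem centralu_zero_right (r n : ℕ) :
    centralu r n 0 = (-1) ^ n * ∏ i ∈ Finset.range n, ((i : ℤ) ^ 2 + r) := by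
  cases n <;> simp [centralu]

theorem centralu_eq_coeff (r n k : ℕ) :
    centralu r n k = ((centralRoots r n).map fun a => X - C a).prod.coeff k := by
  induction n generalizing k with
  | zero => cases k <;> simp [centralu, centralRoots, coeff_one]
  | succ n ih =>
    rw [centralRoots_succ, Multiset.map_cons, Multiset.prod_cons, mul_comm]
    rcases k with _ | k
    · rw [mul_coeff_zero, ← ih, centralu_zero_right, centralu_zero_right, Finset.prod_range_succ]
      simp only [coeff_sub, coeff_X_zero, coeff_C_zero]
      ring
    · rw [coeff_mul_X_sub_C, ← ih, ← ih, centralu]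
      ring

theorem neg_one_pow_mul_centralu (r : ℕ) {n k : ℕ} (hk : k ≤ n) :
    (-1) ^ (n - k) * centralu r n k = (centralRoots r n).esymm (n - k) := by
  rw [centralu_eq_coeff, Multiset.prod_X_sub_C_coeff _ ((card_centralRoots r n).symm ▸ hk),
    card_centralRoots, ← mul_assoc, ← mul_pow, neg_one_mul, neg_neg, one_pow, one_mul]

theorem centralu_newton_inequality_general (r n k : ℕ) (hk : 1 ≤ k) (hkn : k ≤ n - 1) :
    ((k : ℚ) + 1) / k * (((n : ℚ) - k + 1) / ((n : ℚ) - k)) *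
        (((-1) ^ (n - (k - 1)) * centralu r n (k - 1) : ℤ) : ℚ) *
        (((-1) ^ (n - (k + 1)) * centralu r n (k + 1) : ℤ) : ℚ) ≤
      ((((-1) ^ (n - k) * centralu r n k : ℤ) : ℚ)) ^ 2 := by
  obtain ⟨j, rfl⟩ : ∃ j, n = j + k + 1 := ⟨n - k - 1, by omega⟩
  have hnewton := Multiset.esymm_newton (centralRoots_nonneg r (j + k + 1)) j
  rw [card_centralRoots] at hnewton
  rw [neg_one_pow_mul_centralu r (by omega : k - 1 ≤ j + k + 1), neg_one_pow_mul_centralu r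
    (by omega : k ≤ j + k + 1), neg_one_pow_mul_centralu r (by omega : k + 1 ≤ j + k + 1),
    show j + k + 1 - (k - 1) = j + 2 by omega, show j + k + 1 - k = j + 1 by omega,
    show j + k + 1 - (k + 1) = j by omega, div_mul_div_comm, div_mul_eq_mul_div,
    div_mul_eq_mul_div, div_le_iff₀ (by push_cast; ring_nf; positivity)]
  have hnewtonQ := (Int.cast_le (R := ℚ)).mpr hnewton
  push_cast at hnewtonQ ⊢
  linarith

theorem centralu_newton_inequality (r n k : ℕ) (hn : 1 ≤ n) (hk : 1 ≤ k) (hkn : k ≤ n - 1) :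
    ((k : ℚ) + 1) / k * (((n : ℚ) - k + 1) / ((n : ℚ) - k)) *
        (((-1) ^ (n - (k - 1)) * centralu r n (k - 1) : ℤ) : ℚ) *
        (((-1) ^ (n - (k + 1)) * centralu r n (k + 1) : ℤ) : ℚ) ≤
      ((((-1) ^ (n - k) * centralu r n k : ℤ) : ℚ)) ^ 2 :=
  centralu_newton_inequality_general r n k hk hkn
end

section
/- For all n ≥ k ≥ 0, u_r(n,k) = Σ_{i=k}^{n} C(i,k) · (-r)^{i-k} · u(n,i), where u(n,i) = u_0(n,i). -/
/-!
The recurrence says that row `n` of `centralu r` is the coefficient list of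
`∏_{i<n} (X - (i² + r))`. This polynomial is the one for `r = 0` with `X` replaced by `X - r`,
and expanding each `(X - r)^i` by the binomial theorem gives the identity.
-/

open Polynomial Finset

theorem Polynomial.coeff_comp_X_add_C {R : Type*} [CommSemiring R] {p : R[X]} {n : ℕ}
    (hp : p.natDegree ≤ n) (a : R) (k : ℕ) :
    (p.comp (X + C a)).coeff k = ∑ i ∈ Icc k n, (i.choose k : R) * a ^ (i - k) * p.coeff i := by
  conv_lhs => rw [p.as_sum_range_C_mul_X_pow' (Nat.lt_succ_of_le hp)]
  simp only [sum_comp, mul_comp, C_comp, X_pow_comp, finsetSum_coeff, coeff_C_mul,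
    coeff_X_add_C_pow]
  have hsub : Icc k n ⊆ range (n + 1) := fun i hi => by
    simp only [mem_Icc, mem_range] at hi ⊢
    omega
  rw [← sum_subset hsub fun i hi hik => ?_]
  · exact sum_congr rfl fun i _ => by ring
  · simp only [mem_Icc, mem_range, not_and, not_le] at hi hik
    rw [Nat.choose_eq_zero_of_lt (by omega), Nat.cast_zero, mul_zero, mul_zero]

noncomputable def centralPoly (r n : ℕ) : ℤ[X] :=
  ∏ i ∈ range n, (X - C ((i : ℤ) ^ 2 + r))

theorem natDegree_centralPoly (r n : ℕ) : (centralPoly r n).natDegree = n := by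
  rw [centralPoly, natDegree_finsetProd_X_sub_C_eq_card, card_range]

theorem centralPoly_eq_comp (r n : ℕ) :
    centralPoly r n = (centralPoly 0 n).comp (X + C (-(r : ℤ))) := by
  rw [centralPoly, centralPoly, Polynomial.prod_comp]
  refine prod_congr rfl fun i _ => ?_
  simp only [sub_comp, X_comp, C_comp, Nat.cast_zero, add_zero, map_add, map_neg]
  ring

theorem centralu_succ_zero (r n : ℕ) :
    centralu r (n + 1) 0 = -((n : ℤ) ^ 2 + r) * centralu r n 0 := by
  cases n with
  | zero => simp [centralu]
  | succ n =>
    simp only [centralu, prod_range_succ]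
    push_cast
    ring

theorem centralu_eq_coeff_centralPoly (r n k : ℕ) :
    centralu r n k = (centralPoly r n).coeff k := by
  induction n generalizing k with
  | zero => cases k <;> simp [centralu, centralPoly, coeff_one]
  | succ n ih =>
    rw [centralPoly, prod_range_succ, ← centralPoly]
    cases k with
    | zero =>
      rw [centralu_succ_zero, ih, mul_coeff_zero, coeff_sub, coeff_X_zero, coeff_C_zero]
      ring
    | succ k =>
      rw [coeff_mul_X_sub_C, centralu, ih, ih]
      ring

theorem centralu_eq_sum_centralu_zero_general (r n k : ℕ) :
    centralu r n k =
      ∑ i ∈ Finset.Icc k n, (i.choose k : ℤ) * (-(r : ℤ)) ^ (i - k) * centralu 0 n i := by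
  simp only [centralu_eq_coeff_centralPoly]
  rw [centralPoly_eq_comp, coeff_comp_X_add_C (natDegree_centralPoly 0 n).le]

theorem centralu_eq_sum_centralu_zero (r n k : ℕ) (h : k ≤ n) :
    centralu r n k =
      ∑ i ∈ Finset.Icc k n, (i.choose k : ℤ) * (-(r : ℤ)) ^ (i - k) * centralu 0 n i :=
  centralu_eq_sum_centralu_zero_general r n k
end
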